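/- arXiv:math/0512094 — 3 statements merged into one kernel-verified Lean document; each statement's English description precedes it below -/
import Mathlib

section
/- Let F : M → N be a smooth surjective submersion and let μ : M → ℝ be a smooth function. Then there exists a smooth function ν : N → ℝ such that for every m ∈ M with the property that μ is constant on the fiber F⁻¹({F(m)}), one has ν(F(m)) = μ(m). -/
/-!
Near every point of `N` a submersion has a smooth local section `s` (implicit function theorem
in charts), and `μ ∘ s` is then a smooth local candidate for `ν`: its value at `y` is correct
whenever `μ` is constant on the fiber over `y`, since `s y` lies in that fiber. The admissible
values at `y` form a convex set (a single point or everything), so a smooth partition of unity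
on `N` glues the local candidates into a global solution.
-/

open Set Function Filter Topology
open scoped Manifold

theorem OpenPartialHomeomorph.eventually_contDiffAt_symm {𝕜 : Type*} [NontriviallyNormedField 𝕜]
    {E G : Type*} [NormedAddCommGroup E] [NormedSpace 𝕜 E] [CompleteSpace E]
    [NormedAddCommGroup G] [NormedSpace 𝕜 G] (P : OpenPartialHomeomorph E G) {a : E}
    (ha : a ∈ P.source) {n : WithTop ℕ∞} (hn : n ≠ 0) (hP : ∀ᶠ x in 𝓝 a, ContDiffAt 𝕜 n P x)
    (hPa : (fderiv 𝕜 P a).IsInvertible) : ∀ᶠ y in 𝓝 (P a), ContDiffAt 𝕜 n P.symm y := by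
  obtain ⟨e, he⟩ := hPa
  have hinv : ∀ᶠ x in 𝓝 a, (fderiv 𝕜 P x).IsInvertible :=
    (hP.self_of_nhds.continuousAt_fderiv hn).eventually_mem (he ▸ ContinuousLinearEquiv.nhds e)
  filter_upwards [P.open_target.mem_nhds (P.map_source ha),
    (P.tendsto_symm ha).eventually (hP.and hinv)] with y hy ⟨hPy, e', he'⟩
  exact P.contDiffAt_symm hy (he' ▸ (hPy.differentiableAt hn).hasFDerivAt) hPy

theorem exists_local_rightInverse_of_surjective_fderiv {𝕜 : Type*} [RCLike 𝕜]
    {E F : Type*} [NormedAddCommGroup E] [NormedSpace 𝕜 E] [CompleteSpace E]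
    [NormedAddCommGroup F] [NormedSpace 𝕜 F] [FiniteDimensional 𝕜 F] {f : E → F} {a : E}
    {n : WithTop ℕ∞} (hn : n ≠ 0) (hf : ∀ᶠ x in 𝓝 a, ContDiffAt 𝕜 n f x)
    (hf' : Surjective (fderiv 𝕜 f a)) :
    ∃ g : F → E, Tendsto g (𝓝 (f a)) (𝓝 a) ∧ ∀ᶠ y in 𝓝 (f a), ContDiffAt 𝕜 n g y ∧ f (g y) = y := by
  have := FiniteDimensional.complete 𝕜 F
  have hfa : HasStrictFDerivAt f (fderiv 𝕜 f a) a := hf.self_of_nhds.hasStrictFDerivAt hn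
  have hrange : (fderiv 𝕜 f a).range = ⊤ := LinearMap.range_eq_top.2 hf'
  set P := hfa.implicitToOpenPartialHomeomorph f _ hrange
  obtain ⟨q, hq⟩ : ∃ q : E →L[𝕜] (fderiv 𝕜 f a).ker, ⇑P = fun x ↦ (f x, q (x - a)) := ⟨_, rfl⟩
  have hP : ∀ᶠ x in 𝓝 a, ContDiffAt 𝕜 n P x := hf.mono fun x hx ↦ by
    rw [hq]; exact hx.prodMk (q.contDiff.comp (contDiff_id.sub contDiff_const)).contDiffAt
  have hsymm := P.eventually_contDiffAt_symm (hfa.mem_implicitToOpenPartialHomeomorph_source hrange)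
    hn hP (ImplicitFunctionData.isInvertible_fderiv_prodFun _)
  rw [hfa.implicitToOpenPartialHomeomorph_self hrange] at hsymm
  have hpair : Tendsto (fun y ↦ (y, (0 : (fderiv 𝕜 f a).ker))) (𝓝 (f a)) (𝓝 (f a, 0)) :=
    tendsto_id.prodMk_nhds tendsto_const_nhds
  refine ⟨fun y ↦ hfa.implicitFunction f _ hrange y 0,
    hfa.tendsto_implicitFunction hrange tendsto_id tendsto_const_nhds, ?_⟩
  filter_upwards [hpair.eventually hsymm, hpair.eventually (hfa.map_implicitFunction_eq hrange)]
    with y hy hfy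
  exact ⟨hy.comp y (contDiffAt_id.prodMk contDiffAt_const), hfy⟩

section LocalSection

variable {𝕜 : Type*} [RCLike 𝕜]
  {EM : Type*} [NormedAddCommGroup EM] [NormedSpace 𝕜 EM] [CompleteSpace EM]
  {HM : Type*} [TopologicalSpace HM] {IM : ModelWithCorners 𝕜 EM HM} [IM.Boundaryless]
  {M : Type*} [TopologicalSpace M] [ChartedSpace HM M]
  {EN : Type*} [NormedAddCommGroup EN] [NormedSpace 𝕜 EN] [FiniteDimensional 𝕜 EN]
  {HN : Type*} [TopologicalSpace HN] {IN : ModelWithCorners 𝕜 EN HN}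
  {N : Type*} [TopologicalSpace N] [ChartedSpace HN N]
  {n : WithTop ℕ∞} [IsManifold IM n M] [IsManifold IN n N]

theorem exists_local_section_of_surjective_mfderiv {F : M → N} {m : M} (hn : n ≠ 0)
    (hF : ∀ᶠ x in 𝓝 m, ContMDiffAt IM IN n F x) (hFm : Surjective (mfderiv IM IN F m)) :
    ∃ s : N → M, ∀ᶠ y in 𝓝 (F m), ContMDiffAt IN IM n s y ∧ F (s y) = y := by
  set φ := extChartAt IM m
  set ψ := extChartAt IN (F m)
  have hgood : ∀ᶠ x in 𝓝 (φ m), x ∈ φ.target ∧ ContMDiffAt IM IN n F (φ.symm x) ∧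
      F (φ.symm x) ∈ ψ.source := by
    have hφsymm : Tendsto φ.symm (𝓝 (φ m)) (𝓝 m) := by
      simpa only [φ, extChartAt_to_inv] using (continuousAt_extChartAt_symm (I := IM) m).tendsto
    filter_upwards [(isOpen_extChartAt_target m).mem_nhds (mem_extChartAt_target m),
      hφsymm.eventually hF, hφsymm.eventually (hF.self_of_nhds.continuousAt.preimage_mem_nhds
        (extChartAt_source_mem_nhds (I := IN) (F m)))] with x hx hFx hFxψ
    exact ⟨hx, hFx, hFxψ⟩
  have hw : ∀ᶠ x in 𝓝 (φ m), ContDiffAt 𝕜 n (writtenInExtChartAt IM IN m F) x := by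
    filter_upwards [hgood] with x ⟨hx, hFx, hFxψ⟩
    rw [extChartAt_source] at hFxψ
    exact contMDiffAt_iff_contDiffAt.1 ((contMDiffAt_extChartAt' hFxψ).comp x (hFx.comp x
      ((contMDiffOn_extChartAt_symm m).contMDiffAt ((isOpen_extChartAt_target m).mem_nhds hx))))
  have hw' : Surjective (fderiv 𝕜 (writtenInExtChartAt IM IN m F) (φ m)) := by
    rwa [(hF.self_of_nhds.mdifferentiableAt hn).mfderiv, IM.range_eq_univ, fderivWithin_univ]
      at hFm
  obtain ⟨g, hgφ, hg⟩ := exists_local_rightInverse_of_surjective_fderiv hn hw hw'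
  have hwm : writtenInExtChartAt IM IN m F (φ m) = ψ (F m) := by
    simp [writtenInExtChartAt, φ, ψ]
  rw [hwm] at hg hgφ
  refine ⟨fun y ↦ φ.symm (g (ψ y)), ?_⟩
  have hψ : Tendsto ψ (𝓝 (F m)) (𝓝 (ψ (F m))) := continuousAt_extChartAt (F m)
  filter_upwards [extChartAt_source_mem_nhds (I := IN) (F m), hψ.eventually hg,
    hψ.eventually (hgφ.eventually hgood)] with y hy hgy hgood
  obtain ⟨hgy, hwgy⟩ := hgy
  obtain ⟨hgyφ, -, hgyψ⟩ := hgood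
  refine ⟨?_, ψ.injOn hgyψ hy hwgy⟩
  rw [extChartAt_source] at hy
  exact ((contMDiffOn_extChartAt_symm m).contMDiffAt
    ((isOpen_extChartAt_target m).mem_nhds hgyφ)).comp y
    (hgy.contMDiffAt.comp y (contMDiffAt_extChartAt' hy))

end LocalSection

section ConstantFiberValues

variable {M N V : Type*}

/-- The admissible values of `ν` at `y` for `ν ∘ F = μ` on fibers where `μ` is constant: `{c}`
if `μ ≡ c` on the (nonempty) fiber over `y`, and everything otherwise. -/
def constantFiberValues (F : M → N) (μ : M → V) (y : N) : Set V :=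
  ⋂ (m) (_ : F m = y) (_ : ∀ m', F m' = y → μ m' = μ m), {μ m}

theorem convex_constantFiberValues [AddCommGroup V] [Module ℝ V] (F : M → N) (μ : M → V) (y : N) :
    Convex ℝ (constantFiberValues F μ y) :=
  convex_iInter fun _ ↦ convex_iInter fun _ ↦ convex_iInter fun _ ↦ convex_singleton _

theorem apply_mem_constantFiberValues (F : M → N) (μ : M → V) (x : M) :
    μ x ∈ constantFiberValues F μ (F x) := by
  simp only [constantFiberValues, mem_iInter, mem_singleton_iff]
  exact fun m _ hμm ↦ hμm x rfl

theorem eq_of_mem_constantFiberValues {F : M → N} {μ : M → V} {m : M} {c : V}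
    (hc : c ∈ constantFiberValues F μ (F m)) (hm : ∀ m', F m' = F m → μ m' = μ m) : c = μ m := by
  simp only [constantFiberValues, mem_iInter, mem_singleton_iff] at hc
  exact hc m rfl hm

end ConstantFiberValues

section Gluing

variable {M N V : Type*} [NormedAddCommGroup V] [NormedSpace ℝ V]
  {EM : Type*} [NormedAddCommGroup EM] [NormedSpace ℝ EM]
  {HM : Type*} [TopologicalSpace HM] {IM : ModelWithCorners ℝ EM HM}
  [TopologicalSpace M] [ChartedSpace HM M]
  {EN : Type*} [NormedAddCommGroup EN] [NormedSpace ℝ EN] [FiniteDimensional ℝ EN]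
  {HN : Type*} [TopologicalSpace HN] {IN : ModelWithCorners ℝ EN HN}
  [TopologicalSpace N] [ChartedSpace HN N] [IsManifold IN (⊤ : ℕ∞) N] [T2Space N]
  [SecondCountableTopology N]

theorem exists_contMDiff_eq_on_constant_fibers_of_local_sections {F : M → N} {n : ℕ∞}
    (hF : ∀ y, ∃ s : N → M, ∀ᶠ z in 𝓝 y, ContMDiffAt IN IM n s z ∧ F (s z) = z)
    {μ : M → V} (hμ : ContMDiff IM 𝓘(ℝ, V) n μ) :
    ∃ ν : N → V, ContMDiff IN 𝓘(ℝ, V) n ν ∧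
      ∀ m, (∀ m', F m' = F m → μ m' = μ m) → ν (F m) = μ m := by
  have : LocallyCompactSpace HN := IN.locallyCompactSpace
  have : LocallyCompactSpace N := ChartedSpace.locallyCompactSpace HN N
  obtain ⟨ν, hν⟩ := exists_contMDiffMap_forall_mem_convex_of_local IN
    (convex_constantFiberValues F μ) fun y ↦ by
      obtain ⟨s, hs⟩ := hF y
      exact ⟨_, hs, μ ∘ s, fun z hz ↦ (hμ.contMDiffAt.comp z hz.1).contMDiffWithinAt,
        fun z hz ↦ by simpa only [comp_apply, hz.2] using apply_mem_constantFiberValues F μ (s z)⟩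
  exact ⟨ν, ν.contMDiff, fun m hm ↦ eq_of_mem_constantFiberValues (hν (F m)) hm⟩

end Gluing

theorem extension_of_function_smooth_general
    {EM : Type*} [NormedAddCommGroup EM] [NormedSpace ℝ EM] [FiniteDimensional ℝ EM]
    {HM : Type*} [TopologicalSpace HM] {IM : ModelWithCorners ℝ EM HM} [IM.Boundaryless]
    {M : Type*} [TopologicalSpace M] [ChartedSpace HM M] [IsManifold IM (⊤ : ℕ∞) M]
    {EN : Type*} [NormedAddCommGroup EN] [NormedSpace ℝ EN] [FiniteDimensional ℝ EN]
    {HN : Type*} [TopologicalSpace HN] {IN : ModelWithCorners ℝ EN HN}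
    {N : Type*} [TopologicalSpace N] [ChartedSpace HN N] [IsManifold IN (⊤ : ℕ∞) N]
    [T2Space N] [SecondCountableTopology N]
    (F : M → N) (hF : ContMDiff IM IN (⊤ : ℕ∞) F) (hFsurj : Function.Surjective F)
    (hFsub : ∀ m : M, Function.Surjective (mfderiv IM IN F m))
    (μ : M → ℝ) (hμ : ContMDiff IM 𝓘(ℝ, ℝ) (⊤ : ℕ∞) μ) :
    ∃ ν : N → ℝ, ContMDiff IN 𝓘(ℝ, ℝ) (⊤ : ℕ∞) ν ∧
      ∀ m : M, (∀ m' : M, F m' = F m → μ m' = μ m) → ν (F m) = μ m := by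
  refine exists_contMDiff_eq_on_constant_fibers_of_local_sections (fun y ↦ ?_) hμ
  obtain ⟨m, rfl⟩ := hFsurj y
  exact exists_local_section_of_surjective_mfderiv (by simp) (.of_forall hF) (hFsub m)

/-- Lemma about the extension of a function (smooth version): if `F : M → N` is a smooth
surjective submersion between finite-dimensional smooth manifolds without boundary and
`μ : M → ℝ` is smooth, then there is a smooth function `ν : N → ℝ` such that `ν (F m) = μ m`
whenever `μ` is constant on the fiber of `F` through `m`. -/
theorem extension_of_function_smooth
    {EM : Type*} [NormedAddCommGroup EM] [NormedSpace ℝ EM] [FiniteDimensional ℝ EM]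
    {HM : Type*} [TopologicalSpace HM] {IM : ModelWithCorners ℝ EM HM} [IM.Boundaryless]
    {M : Type*} [TopologicalSpace M] [ChartedSpace HM M] [IsManifold IM (⊤ : ℕ∞) M]
    [T2Space M] [SecondCountableTopology M]
    {EN : Type*} [NormedAddCommGroup EN] [NormedSpace ℝ EN] [FiniteDimensional ℝ EN]
    {HN : Type*} [TopologicalSpace HN] {IN : ModelWithCorners ℝ EN HN} [IN.Boundaryless]
    {N : Type*} [TopologicalSpace N] [ChartedSpace HN N] [IsManifold IN (⊤ : ℕ∞) N]
    [T2Space N] [SecondCountableTopology N]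
    (F : M → N) (hF : ContMDiff IM IN (⊤ : ℕ∞) F) (hFsurj : Function.Surjective F)
    (hFsub : ∀ m : M, Function.Surjective (mfderiv IM IN F m))
    (μ : M → ℝ) (hμ : ContMDiff IM 𝓘(ℝ, ℝ) (⊤ : ℕ∞) μ) :
    ∃ ν : N → ℝ, ContMDiff IN 𝓘(ℝ, ℝ) (⊤ : ℕ∞) ν ∧
      ∀ m : M, (∀ m' : M, F m' = F m → μ m' = μ m) → ν (F m) = μ m :=
  extension_of_function_smooth_general F hF hFsurj hFsub μ hμ
end

section
/- Let F : M → N be a smooth surjective submersion and let μ : M → ℝ be a continuous function. Then there exists a continuous function ν : N → ℝ such that for every m ∈ M with the property that μ is constant on the fiber F⁻¹({F(m)}), one has ν(F(m)) = μ(m). -/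
/-!
A submersion is an open map: in charts its derivative is surjective, so by the surjective
inverse function theorem it maps neighbourhoods onto neighbourhoods. For an open surjection `F`
the points of `N` over whose fibre `μ` is constant form a closed set `A` (two distinct values on a
fibre persist on nearby fibres), and `μ` descends to a continuous function on `A`. Since `N` is
locally compact, Hausdorff and second countable, it is normal, and Tietze's theorem extends this
function from `A` to all of `N`.
-/

open scoped Manifold Topology
open Filter Set Function

section Submersion

variable {EM : Type*} [NormedAddCommGroup EM] [NormedSpace ℝ EM] [CompleteSpace EM]
  {HM : Type*} [TopologicalSpace HM] {IM : ModelWithCorners ℝ EM HM} [IM.Boundaryless]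
  {M : Type*} [TopologicalSpace M] [ChartedSpace HM M]
  {EN : Type*} [NormedAddCommGroup EN] [NormedSpace ℝ EN] [CompleteSpace EN]
  {HN : Type*} [TopologicalSpace HN] {IN : ModelWithCorners ℝ EN HN}
  {N : Type*} [TopologicalSpace N] [ChartedSpace HN N]
  {F : M → N} {n : WithTop ℕ∞}

theorem ContMDiffAt.map_nhds_eq_of_surjective_mfderiv {m : M} (hF : ContMDiffAt IM IN n F m)
    (hn : n ≠ 0) (hsurj : Surjective (mfderiv IM IN F m)) : map F (𝓝 m) = 𝓝 (F m) := by
  set φ := extChartAt IM m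
  set ψ := extChartAt IN (F m)
  set g := writtenInExtChartAt IM IN m F
  have hg : ContDiffAt ℝ n g (φ m) := by
    have := (contMDiffAt_iff.1 hF).2
    rwa [IM.range_eq_univ, contDiffWithinAt_univ] at this
  have hderiv : fderiv ℝ g (φ m) = mfderiv IM IN F m := by
    rw [(hF.mdifferentiableAt hn).mfderiv, IM.range_eq_univ, fderivWithin_univ]
  have hmap : map g (𝓝 (φ m)) = 𝓝 (ψ (F m)) := by
    refine (hg.hasStrictFDerivAt hn).map_nhds_eq_of_surj ?_ |>.trans ?_
    · rw [hderiv]; exact LinearMap.range_eq_top.2 hsurj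
    · change 𝓝 (ψ (F (φ.symm (φ m)))) = _
      rw [extChartAt_to_inv]
  have hloc : ψ.symm ∘ g ∘ φ =ᶠ[𝓝 m] F := by
    filter_upwards [extChartAt_source_mem_nhds (I := IM) m,
      hF.continuousAt.preimage_mem_nhds (extChartAt_source_mem_nhds (I := IN) (F m))] with y hy hFy
    change ψ.symm (ψ (F (φ.symm (φ y)))) = F y
    rw [φ.left_inv hy, ψ.left_inv hFy]
  refine le_antisymm hF.continuousAt ?_
  calc 𝓝 (F m) = map ψ.symm (𝓝[range IN] ψ (F m)) := (map_extChartAt_symm_nhdsWithin_range _).symm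
    _ ≤ map ψ.symm (𝓝 (ψ (F m))) := map_mono nhdsWithin_le_nhds
    _ = map F (𝓝 m) := by
      rw [← hmap, ← map_extChartAt_nhds_of_boundaryless m, map_map, map_map]
      exact map_congr hloc

theorem ContMDiff.isOpenMap_of_surjective_mfderiv (hF : ContMDiff IM IN n F) (hn : n ≠ 0)
    (hsurj : ∀ m, Surjective (mfderiv IM IN F m)) : IsOpenMap F :=
  IsOpenMap.of_nhds_le fun m => ((hF m).map_nhds_eq_of_surjective_mfderiv hn (hsurj m)).ge

end Submersion

universe u

namespace IsOpenMap

variable {X Z : Type*} {Y : Type u} [TopologicalSpace X] [TopologicalSpace Y] [TopologicalSpace Z]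
  {f : X → Y} {g : X → Z}

theorem isClosed_setOf_subsingleton_image_fiber [T2Space Z] (hf : IsOpenMap f)
    (hg : Continuous g) : IsClosed {y | (g '' (f ⁻¹' {y})).Subsingleton} := by
  refine isOpen_compl_iff.1 <| isOpen_iff_forall_mem_open.2 fun y hy => ?_
  obtain ⟨_, ⟨x, hx, rfl⟩, _, ⟨x', hx', rfl⟩, hne⟩ := not_subsingleton_iff.1 hy
  obtain ⟨U, V, hU, hV, hxU, hx'V, hUV⟩ := t2_separation hne
  refine ⟨f '' (g ⁻¹' U) ∩ f '' (g ⁻¹' V), ?_,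
    (hf _ (hU.preimage hg)).inter (hf _ (hV.preimage hg)), ⟨x, hxU, hx⟩, ⟨x', hx'V, hx'⟩⟩
  rintro _ ⟨⟨z, hzU, rfl⟩, ⟨z', hz'V, hz'⟩⟩ hsub
  exact hUV.ne_of_mem hzU hz'V (hsub ⟨z, rfl, rfl⟩ ⟨z', hz', rfl⟩)

theorem continuousOn_of_comp_eq (hf : IsOpenMap f) (hg : Continuous g) {h : Y → Z} {s : Set Y}
    (hs : s ⊆ range f) (hfg : ∀ x, f x ∈ s → h (f x) = g x) : ContinuousOn h s := by
  rintro _ hy V hV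
  obtain ⟨x, rfl⟩ := hs hy
  rw [hfg x hy] at hV
  refine mem_nhdsWithin_iff_exists_mem_nhds_inter.2
    ⟨f '' (g ⁻¹' V), hf.image_mem_nhds (hg.continuousAt hV), ?_⟩
  rintro _ ⟨⟨z, hzV, rfl⟩, hzs⟩
  rwa [mem_preimage, hfg z hzs]

theorem exists_continuous_comp_eq_of_fiber_const [NormalSpace Y] [T2Space Z]
    [TietzeExtension.{u} Z] (hf : IsOpenMap f) (hsurj : Surjective f) (hg : Continuous g) :
    ∃ h : Y → Z, Continuous h ∧ ∀ x, (∀ x', f x' = f x → g x' = g x) → h (f x) = g x := by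
  set s := {y | (g '' (f ⁻¹' {y})).Subsingleton}
  have hsec : ∀ x, f x ∈ s → g (surjInv hsurj (f x)) = g x := fun x hx =>
    hx ⟨_, surjInv_eq hsurj _, rfl⟩ ⟨x, rfl, rfl⟩
  have hcont := hf.continuousOn_of_comp_eq (h := g ∘ surjInv hsurj) hg (fun y _ => hsurj y) hsec
  obtain ⟨h, hh⟩ :=
    ContinuousMap.exists_restrict_eq (hf.isClosed_setOf_subsingleton_image_fiber hg)
      ⟨s.domRestrict (g ∘ surjInv hsurj), hcont.domRestrict⟩
  refine ⟨h, h.continuous, fun x hx => ?_⟩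
  have hxs : f x ∈ s := by
    rintro _ ⟨x₁, hx₁, rfl⟩ _ ⟨x₂, hx₂, rfl⟩
    rw [hx x₁ hx₁, hx x₂ hx₂]
  exact (congrArg (· ⟨f x, hxs⟩) hh).trans (hsec x hxs)

end IsOpenMap

theorem extension_of_function_continuous_general
    {EM : Type*} [NormedAddCommGroup EM] [NormedSpace ℝ EM] [FiniteDimensional ℝ EM]
    {HM : Type*} [TopologicalSpace HM] {IM : ModelWithCorners ℝ EM HM} [IM.Boundaryless]
    {M : Type*} [TopologicalSpace M] [ChartedSpace HM M]
    {EN : Type*} [NormedAddCommGroup EN] [NormedSpace ℝ EN] [FiniteDimensional ℝ EN]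
    {HN : Type*} [TopologicalSpace HN] {IN : ModelWithCorners ℝ EN HN}
    {N : Type*} [TopologicalSpace N] [ChartedSpace HN N]
    [T2Space N] [SecondCountableTopology N]
    (F : M → N) (hF : ContMDiff IM IN (⊤ : ℕ∞) F) (hFsurj : Function.Surjective F)
    (hFsub : ∀ m : M, Function.Surjective (mfderiv IM IN F m))
    (μ : M → ℝ) (hμ : Continuous μ) :
    ∃ ν : N → ℝ, Continuous ν ∧
      ∀ m : M, (∀ m' : M, F m' = F m → μ m' = μ m) → ν (F m) = μ m := by
  have : LocallyCompactSpace N := Manifold.locallyCompact_of_finiteDimensional IN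
  have hopen : IsOpenMap F := hF.isOpenMap_of_surjective_mfderiv (by simp) hFsub
  exact hopen.exists_continuous_comp_eq_of_fiber_const hFsurj hμ

/-- Lemma about the extension of a function (continuous version): if `F : M → N` is a smooth
surjective submersion between finite-dimensional smooth manifolds without boundary and
`μ : M → ℝ` is continuous, then there is a continuous function `ν : N → ℝ` such that
`ν (F m) = μ m` whenever `μ` is constant on the fiber of `F` through `m`. -/
theorem extension_of_function_continuous
    {EM : Type*} [NormedAddCommGroup EM] [NormedSpace ℝ EM] [FiniteDimensional ℝ EM]
    {HM : Type*} [TopologicalSpace HM] {IM : ModelWithCorners ℝ EM HM} [IM.Boundaryless]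
    {M : Type*} [TopologicalSpace M] [ChartedSpace HM M] [IsManifold IM (⊤ : ℕ∞) M]
    [T2Space M] [SecondCountableTopology M]
    {EN : Type*} [NormedAddCommGroup EN] [NormedSpace ℝ EN] [FiniteDimensional ℝ EN]
    {HN : Type*} [TopologicalSpace HN] {IN : ModelWithCorners ℝ EN HN} [IN.Boundaryless]
    {N : Type*} [TopologicalSpace N] [ChartedSpace HN N] [IsManifold IN (⊤ : ℕ∞) N]
    [T2Space N] [SecondCountableTopology N]
    (F : M → N) (hF : ContMDiff IM IN (⊤ : ℕ∞) F) (hFsurj : Function.Surjective F)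
    (hFsub : ∀ m : M, Function.Surjective (mfderiv IM IN F m))
    (μ : M → ℝ) (hμ : Continuous μ) :
    ∃ ν : N → ℝ, Continuous ν ∧
      ∀ m : M, (∀ m' : M, F m' = F m → μ m' = μ m) → ν (F m) = μ m :=
  extension_of_function_continuous_general F hF hFsurj hFsub μ hμ
end

section
/- Let k ∈ ℕ and let P : ℝ³ → ℝ be smooth on ℝ³ ∖ {0}, positively homogeneous of degree k (P(c·x) = c^k · P(x) for all c > 0 and x ≠ 0), and harmonic on ℝ³ ∖ {0} (ΔP = 0 there). Let v : ℝ × (0, ∞) → ℝ be C² and satisfy ∂_t v(t,r) = ∂²_r v(t,r) − k(k+1) · r^{−2} · v(t,r) for all t ∈ ℝ and r > 0. Then the function u defined for t ∈ ℝ and x ∈ ℝ³ ∖ {0} by u(t,x) := P(x) · ‖x‖^{−(k+1)} · v(t, ‖x‖) satisfies the heat equation ∂_t u(t,x) = Δ_x u(t,x) on ℝ × (ℝ³ ∖ {0}). -/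
/-- The second derivative of `f` at `x` along the direction `v`. -/
noncomputable def lineDeriv2 (f : EuclideanSpace ℝ (Fin 3) → ℝ)
    (x v : EuclideanSpace ℝ (Fin 3)) : ℝ :=
  iteratedDeriv 2 (fun s : ℝ => f (x + s • v)) 0

/-- The Laplacian on `ℝ³`: the sum of the second partial derivatives along the three
coordinate directions. -/
noncomputable def lap (f : EuclideanSpace ℝ (Fin 3) → ℝ)
    (x : EuclideanSpace ℝ (Fin 3)) : ℝ :=
  ∑ i : Fin 3, lineDeriv2 f x (EuclideanSpace.single i 1)

/-! ### Auxiliary machinery -/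

noncomputable def Gfun (m : ℝ) (w : ℝ → ℝ) : ℝ → ℝ := fun z => z ^ m * w z
noncomputable def Gfun1 (m : ℝ) (w : ℝ → ℝ) : ℝ → ℝ :=
  fun z => m * z ^ (m-1) * w z + z ^ m * deriv w z
noncomputable def Gfun2 (m : ℝ) (w : ℝ → ℝ) : ℝ → ℝ :=
  fun z => m * (m-1) * z ^ (m-2) * w z + 2 * m * z ^ (m-1) * deriv w z
    + z ^ m * iteratedDeriv 2 w z

lemma aux_w1 (w : ℝ → ℝ) (hw : ContDiff ℝ 2 w) (ρ : ℝ) :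
    HasDerivAt w (deriv w ρ) ρ :=
  ((hw.differentiable (by norm_num)) ρ).hasDerivAt

lemma aux_w2 (w : ℝ → ℝ) (hw : ContDiff ℝ 2 w) (ρ : ℝ) :
    HasDerivAt (deriv w) (iteratedDeriv 2 w ρ) ρ := by
  have h1 : ContDiff ℝ 1 (deriv w) :=
    (contDiff_succ_iff_deriv.mp (by exact_mod_cast hw : ContDiff ℝ ((1:ℕ∞)+1) w)).2.2
  have := (h1.differentiable one_ne_zero ρ).hasDerivAt
  rwa [show (2:ℕ) = 1+1 from rfl, iteratedDeriv_succ, iteratedDeriv_one]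

lemma aux_G (m : ℝ) (w : ℝ → ℝ) (hw : ContDiff ℝ 2 w) (ρ : ℝ) (hρ : 0 < ρ) :
    HasDerivAt (Gfun m w) (Gfun1 m w ρ) ρ := by
  have h1 : HasDerivAt (fun z : ℝ => z ^ m) (m * ρ ^ (m-1)) ρ :=
    Real.hasDerivAt_rpow_const (Or.inl hρ.ne')
  exact h1.mul (aux_w1 w hw ρ)

lemma aux_G1 (m : ℝ) (w : ℝ → ℝ) (hw : ContDiff ℝ 2 w) (ρ : ℝ) (hρ : 0 < ρ) :
    HasDerivAt (Gfun1 m w) (Gfun2 m w ρ) ρ := by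
  have h1 : HasDerivAt (fun z : ℝ => z ^ (m-1)) ((m-1) * ρ ^ (m-1-1)) ρ :=
    Real.hasDerivAt_rpow_const (Or.inl hρ.ne')
  have h2 : HasDerivAt (fun z : ℝ => z ^ m) (m * ρ ^ (m-1)) ρ :=
    Real.hasDerivAt_rpow_const (Or.inl hρ.ne')
  have hA : HasDerivAt (fun z : ℝ => m * z ^ (m-1) * w z)
      ((m * ((m-1) * ρ ^ (m-1-1))) * w ρ + (m * ρ ^ (m-1)) * deriv w ρ) ρ :=
    (h1.const_mul m).mul (aux_w1 w hw ρ)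
  have hB : HasDerivAt (fun z : ℝ => z ^ m * deriv w z)
      ((m * ρ ^ (m-1)) * deriv w ρ + ρ ^ m * iteratedDeriv 2 w ρ) ρ :=
    h2.mul (aux_w2 w hw ρ)
  have := hA.add hB
  refine this.congr_deriv ?_
  simp only [Gfun2]
  rw [show m - 1 - 1 = m - 2 by ring]
  ring

lemma aux_norm_line (x : EuclideanSpace ℝ (Fin 3)) (i : Fin 3) (s : ℝ)
    (hs : x + s • EuclideanSpace.single i (1:ℝ) ≠ 0) :
    HasDerivAt (fun σ : ℝ => ‖x + σ • EuclideanSpace.single i (1:ℝ)‖)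
      ((x i + s) / ‖x + s • EuclideanSpace.single i (1:ℝ)‖) s := by
  set e := EuclideanSpace.single i (1:ℝ) with he
  set a := x i with ha
  have hpos : 0 < ‖x + s • e‖ := norm_pos_iff.mpr hs
  have hq : ∀ σ : ℝ, ‖x + σ • e‖^2 = ‖x‖^2 + 2*a*σ + σ^2 := by
    intro σ
    rw [norm_add_sq_real, inner_smul_right, EuclideanSpace.inner_single_right, norm_smul]
    simp [he, EuclideanSpace.norm_single]
    ring
  have hnn : ∀ σ : ℝ, ‖x + σ • e‖ = Real.sqrt (‖x‖^2 + 2*a*σ + σ^2) := by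
    intro σ
    rw [← hq σ, Real.sqrt_sq (norm_nonneg _)]
  have hqd : HasDerivAt (fun σ : ℝ => ‖x‖^2 + 2*a*σ + σ^2) (2*a + 2*s) s := by
    have h1 : HasDerivAt (fun σ : ℝ => ‖x‖^2 + 2*a*σ) (2*a) s := by
      simpa using ((hasDerivAt_id s).const_mul (2*a)).const_add (‖x‖^2)
    have h2 : HasDerivAt (fun σ : ℝ => σ^2) (2*s) s := by
      simpa using hasDerivAt_pow 2 s
    exact h1.add h2
  have hqs : ‖x‖^2 + 2*a*s + s^2 ≠ 0 := by
    rw [← hq s]; exact ne_of_gt (pow_pos hpos 2)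
  have hc := (Real.hasDerivAt_sqrt hqs).comp s hqd
  have heq : (fun σ : ℝ => ‖x + σ • e‖) = (Real.sqrt ∘ fun σ : ℝ => ‖x‖^2 + 2*a*σ + σ^2) := by
    funext σ; exact hnn σ
  rw [heq]
  refine hc.congr_deriv ?_
  rw [← hnn s]
  field_simp

lemma aux_iter2 {h h1 : ℝ → ℝ} {c : ℝ} {s0 : ℝ}
    (H1 : ∀ᶠ s in nhds s0, HasDerivAt h (h1 s) s)
    (H2 : HasDerivAt h1 c s0) : iteratedDeriv 2 h s0 = c := by
  have e1 : deriv h =ᶠ[nhds s0] h1 := H1.mono fun s hs => hs.deriv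
  rw [show (2:ℕ) = 1 + 1 from rfl, iteratedDeriv_succ, iteratedDeriv_one, e1.deriv_eq]
  exact H2.deriv

lemma aux_euler (k : ℕ) (P : EuclideanSpace ℝ (Fin 3) → ℝ)
    (hP : ContDiffOn ℝ (⊤ : ℕ∞) P {(0 : EuclideanSpace ℝ (Fin 3))}ᶜ)
    (hhom : ∀ c : ℝ, 0 < c → ∀ x : EuclideanSpace ℝ (Fin 3), x ≠ 0 →
      P (c • x) = c ^ k * P x)
    (x : EuclideanSpace ℝ (Fin 3)) (hx : x ≠ 0) :
    fderiv ℝ P x x = k * P x := by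
  have hPd : DifferentiableAt ℝ P x :=
    (hP.contDiffAt (isOpen_compl_singleton.mem_nhds hx)).differentiableAt (by simp)
  have hline : HasDerivAt (fun c : ℝ => c • x) x 1 := by
    simpa using (hasDerivAt_id (1:ℝ)).smul_const x
  have hPd' : HasFDerivAt P (fderiv ℝ P x) ((1:ℝ) • x) := by
    rw [one_smul]; exact hPd.hasFDerivAt
  have h1 : HasDerivAt (fun c : ℝ => P (c • x)) (fderiv ℝ P x x) 1 :=
    hPd'.comp_hasDerivAt 1 hline
  have h2 : (fun c : ℝ => P (c • x)) =ᶠ[nhds 1] fun c => c ^ k * P x := by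
    filter_upwards [eventually_gt_nhds (by norm_num : (0:ℝ) < 1)] with c hc
    exact hhom c hc x hx
  have h3 : HasDerivAt (fun c : ℝ => c ^ k * P x) (k * P x) 1 := by
    simpa using (hasDerivAt_pow k (1:ℝ)).mul_const (P x)
  have h4 := h1.deriv
  rw [h2.deriv_eq, h3.deriv] at h4
  exact h4.symm

lemma key_coord (m : ℝ) (P : EuclideanSpace ℝ (Fin 3) → ℝ)
    (hP : ContDiffOn ℝ (⊤ : ℕ∞) P {(0 : EuclideanSpace ℝ (Fin 3))}ᶜ)
    (w : ℝ → ℝ) (hw : ContDiff ℝ 2 w)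
    (x : EuclideanSpace ℝ (Fin 3)) (hx : x ≠ 0) (i : Fin 3) :
    lineDeriv2 (fun y => P y * Gfun m w ‖y‖) x (EuclideanSpace.single i 1)
      = lineDeriv2 P x (EuclideanSpace.single i 1) * Gfun m w ‖x‖
        + 2 * (fderiv ℝ P x (EuclideanSpace.single i 1))
            * (Gfun1 m w ‖x‖ * (x i / ‖x‖))
        + P x * (Gfun2 m w ‖x‖ * (x i / ‖x‖) * (x i / ‖x‖)
            + Gfun1 m w ‖x‖ * ((‖x‖ - x i * (x i / ‖x‖)) / ‖x‖ ^ 2)) := by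
  set e : EuclideanSpace ℝ (Fin 3) := EuclideanSpace.single i 1 with he
  set a : ℝ := x i with ha
  set r : ℝ := ‖x‖ with hrdef
  have hr : 0 < r := norm_pos_iff.mpr hx
  have hx0 : x + (0:ℝ) • e ≠ 0 := by simpa using hx
  have hcont : ContinuousAt (fun s : ℝ => x + s • e) 0 :=
    (continuous_const.add (continuous_id.smul continuous_const)).continuousAt
  have hne : ∀ᶠ s : ℝ in nhds 0, x + s • e ≠ 0 := hcont.eventually_ne hx0
  set n : ℝ → ℝ := fun s => ‖x + s • e‖ with hndef
  have hn0 : n 0 = r := by simp [hndef, hrdef]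
  have hnpos : ∀ s : ℝ, x + s • e ≠ 0 → 0 < n s := fun s hs => norm_pos_iff.mpr hs
  have hn : ∀ s : ℝ, x + s • e ≠ 0 → HasDerivAt n ((a + s) / n s) s := fun s hs =>
    aux_norm_line x i s hs
  have hPc : ∀ y : EuclideanSpace ℝ (Fin 3), y ≠ 0 → ContDiffAt ℝ (⊤ : ℕ∞) P y := fun y hy =>
    hP.contDiffAt (isOpen_compl_singleton.mem_nhds hy)
  have hline : ∀ s : ℝ, HasDerivAt (fun σ : ℝ => x + σ • e) e s := fun s => by
    simpa using ((hasDerivAt_id s).smul_const e).const_add x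
  have hφ : ∀ s : ℝ, x + s • e ≠ 0 →
      HasDerivAt (fun σ : ℝ => P (x + σ • e)) (fderiv ℝ P (x + s • e) e) s := fun s hs =>
    ((hPc _ hs).differentiableAt (by simp)).hasFDerivAt.comp_hasDerivAt s (hline s)
  have hLd : DifferentiableAt ℝ (fderiv ℝ P) x :=
    ((hPc x hx).fderiv_right (m := 1) (WithTop.coe_le_coe.mpr le_top)).differentiableAt one_ne_zero
  have hLfd : HasFDerivAt (fderiv ℝ P) (fderiv ℝ (fderiv ℝ P) x) (x + (0:ℝ) • e) := by
    simpa using hLd.hasFDerivAt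
  have hψ : HasDerivAt (fun s : ℝ => fderiv ℝ P (x + s • e) e)
      ((fderiv ℝ (fderiv ℝ P) x e) e) 0 := by
    have h1 := (ContinuousLinearMap.apply ℝ ℝ e).hasFDerivAt.comp_hasDerivAt (0:ℝ)
      (hLfd.comp_hasDerivAt 0 (hline 0))
    exact h1
  have hP2 : lineDeriv2 P x e = (fderiv ℝ (fderiv ℝ P) x e) e := by
    refine aux_iter2 ?_ hψ
    filter_upwards [hne] with s hs using hφ s hs
  have hGn : ∀ s : ℝ, x + s • e ≠ 0 →
      HasDerivAt (fun σ : ℝ => Gfun m w (n σ)) (Gfun1 m w (n s) * ((a + s) / n s)) s :=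
    fun s hs => (aux_G m w hw (n s) (hnpos s hs)).comp s (hn s hs)
  have hA : ∀ᶠ s : ℝ in nhds 0, HasDerivAt (fun σ : ℝ => P (x + σ • e) * Gfun m w (n σ))
      (fderiv ℝ P (x + s • e) e * Gfun m w (n s)
        + P (x + s • e) * (Gfun1 m w (n s) * ((a + s) / n s))) s := by
    filter_upwards [hne] with s hs using (hφ s hs).mul (hGn s hs)
  have hB : HasDerivAt (fun σ : ℝ => (a + σ) / n σ)
      ((1 * n 0 - (a + 0) * ((a + 0) / n 0)) / n 0 ^ 2) 0 := by
    have h1 : HasDerivAt (fun σ : ℝ => a + σ) 1 0 := by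
      simpa using (hasDerivAt_id (0:ℝ)).const_add a
    exact h1.div (hn 0 hx0) (hnpos 0 hx0).ne'
  have hG1n : HasDerivAt (fun σ : ℝ => Gfun1 m w (n σ))
      (Gfun2 m w (n 0) * ((a + 0) / n 0)) 0 :=
    (aux_G1 m w hw (n 0) (hnpos 0 hx0)).comp 0 (hn 0 hx0)
  have hT1 : HasDerivAt (fun s : ℝ => fderiv ℝ P (x + s • e) e * Gfun m w (n s))
      ((fderiv ℝ (fderiv ℝ P) x e) e * Gfun m w (n 0)
        + fderiv ℝ P (x + (0:ℝ) • e) e * (Gfun1 m w (n 0) * ((a + 0) / n 0))) 0 :=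
    hψ.mul (hGn 0 hx0)
  have hT2 : HasDerivAt (fun s : ℝ => P (x + s • e) * (Gfun1 m w (n s) * ((a + s) / n s)))
      (fderiv ℝ P (x + (0:ℝ) • e) e * (Gfun1 m w (n 0) * ((a + 0) / n 0))
        + P (x + (0:ℝ) • e) * (Gfun2 m w (n 0) * ((a + 0) / n 0) * ((a + 0) / n 0)
            + Gfun1 m w (n 0) * ((1 * n 0 - (a + 0) * ((a + 0) / n 0)) / n 0 ^ 2))) 0 :=
    (hφ 0 hx0).mul (hG1n.mul hB)
  have hC := hT1.add hT2
  have hmain : lineDeriv2 (fun y => P y * Gfun m w ‖y‖) x e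
      = ((fderiv ℝ (fderiv ℝ P) x e) e * Gfun m w (n 0)
        + fderiv ℝ P (x + (0:ℝ) • e) e * (Gfun1 m w (n 0) * ((a + 0) / n 0)))
        + (fderiv ℝ P (x + (0:ℝ) • e) e * (Gfun1 m w (n 0) * ((a + 0) / n 0))
        + P (x + (0:ℝ) • e) * (Gfun2 m w (n 0) * ((a + 0) / n 0) * ((a + 0) / n 0)
            + Gfun1 m w (n 0) * ((1 * n 0 - (a + 0) * ((a + 0) / n 0)) / n 0 ^ 2))) := by
    refine aux_iter2 ?_ hC
    exact hA
  rw [hmain, hP2.symm]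
  have h0 : x + (0:ℝ) • e = x := by simp
  rw [hn0, h0]
  ring

/-- Separation of variables with a spherical harmonic `Φ_k (x) = P x * ‖x‖ ^ (−(k+1))`:
if `P` is smooth, positively homogeneous of degree `k` and harmonic on `ℝ³ ∖ {0}`, and
`v` is a C² solution of `∂_t v = ∂²_r v − k (k+1) r⁻² v` for `r > 0`, then
`u (t, x) := P x * ‖x‖ ^ (−(k+1)) * v (t, ‖x‖)` solves the heat equation
`∂_t u = Δ_x u` on `ℝ × (ℝ³ ∖ {0})`. -/
theorem spherical_harmonic_heat_pullback (k : ℕ)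
    (P : EuclideanSpace ℝ (Fin 3) → ℝ)
    (hP : ContDiffOn ℝ (⊤ : ℕ∞) P {(0 : EuclideanSpace ℝ (Fin 3))}ᶜ)
    (hhom : ∀ c : ℝ, 0 < c → ∀ x : EuclideanSpace ℝ (Fin 3), x ≠ 0 →
      P (c • x) = c ^ k * P x)
    (hharm : ∀ x : EuclideanSpace ℝ (Fin 3), x ≠ 0 → lap P x = 0)
    (v : ℝ → ℝ → ℝ) (hv : ContDiff ℝ 2 (Function.uncurry v))
    (hveq : ∀ t r : ℝ, 0 < r →
      deriv (fun s => v s r) t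
        = iteratedDeriv 2 (v t) r - (k * (k + 1) : ℝ) / r ^ 2 * v t r)
    (u : ℝ → EuclideanSpace ℝ (Fin 3) → ℝ)
    (hu : ∀ t x, u t x = P x * ‖x‖ ^ (-((k : ℝ) + 1)) * v t ‖x‖) :
    ∀ t : ℝ, ∀ x : EuclideanSpace ℝ (Fin 3), x ≠ 0 →
      deriv (fun s => u s x) t = lap (u t) x := by
  intro t x hx
  set r : ℝ := ‖x‖ with hrdef
  have hr : 0 < r := norm_pos_iff.mpr hx
  set m : ℝ := -((k : ℝ) + 1) with hm
  set w : ℝ → ℝ := v t with hwdef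
  have hw : ContDiff ℝ 2 w := hv.comp (contDiff_const.prodMk contDiff_id)
  have hfun : u t = fun y => P y * Gfun m w ‖y‖ := by
    funext y; rw [hu]; simp only [Gfun]; ring
  have hg : ContDiff ℝ 2 (fun s : ℝ => v s r) := hv.comp (contDiff_id.prodMk contDiff_const)
  have hgd : DifferentiableAt ℝ (fun s : ℝ => v s r) t :=
    (hg.differentiable (by norm_num)) t
  have hLHS : deriv (fun s => u s x) t
      = P x * r ^ m * deriv (fun s => v s r) t := by
    have heq : (fun s => u s x) = fun s => (P x * r ^ m) * v s r := by
      funext s; rw [hu]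
    rw [heq, deriv_const_mul _ hgd]
  have hxdecomp : x = ∑ i, x i • EuclideanSpace.single i (1:ℝ) := by
    ext j
    have : (∑ i, x i • EuclideanSpace.single i (1:ℝ)) j
        = ∑ i, (x i • EuclideanSpace.single i (1:ℝ)) j := by rw [WithLp.ofLp_sum]; exact Finset.sum_apply j _ _
    rw [this]
    simp [EuclideanSpace.single_apply]
  have hsum2 : ∑ i, x i * fderiv ℝ P x (EuclideanSpace.single i 1) = k * P x := by
    have h1 := aux_euler k P hP hhom x hx
    calc ∑ i, x i * fderiv ℝ P x (EuclideanSpace.single i 1)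
        = fderiv ℝ P x (∑ i, x i • EuclideanSpace.single i (1:ℝ)) := by
          rw [map_sum]
          exact Finset.sum_congr rfl fun i _ => by
            rw [ContinuousLinearMap.map_smul]; rfl
      _ = (k : ℝ) * P x := by rw [← hxdecomp, h1]
  have hsum3 : ∑ i, (x i)^2 = r^2 := by
    rw [hrdef, EuclideanSpace.norm_eq, Real.sq_sqrt (by positivity)]
    simp [sq_abs]
  have hsum1 : ∑ i, lineDeriv2 P x (EuclideanSpace.single i 1) = 0 := hharm x hx
  have hRHS : lap (u t) x
      = (∑ i, lineDeriv2 P x (EuclideanSpace.single i 1)) * Gfun m w r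
        + (∑ i, x i * fderiv ℝ P x (EuclideanSpace.single i 1)) * (2 * Gfun1 m w r / r)
        + (∑ i, (x i)^2) * (P x * Gfun2 m w r / r^2 - P x * Gfun1 m w r / r^3)
        + 3 * (P x * Gfun1 m w r / r) := by
    rw [lap, hfun]
    calc ∑ i : Fin 3, lineDeriv2 (fun y => P y * Gfun m w ‖y‖) x (EuclideanSpace.single i 1)
        = ∑ i : Fin 3, (lineDeriv2 P x (EuclideanSpace.single i 1) * Gfun m w r
            + (x i * fderiv ℝ P x (EuclideanSpace.single i 1)) * (2 * Gfun1 m w r / r)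
            + (x i)^2 * (P x * Gfun2 m w r / r^2 - P x * Gfun1 m w r / r^3)
            + P x * Gfun1 m w r / r) := by
          refine Finset.sum_congr rfl fun i _ => ?_
          rw [key_coord m P hP w hw x hx i]
          rw [← hrdef]
          field_simp
          ring
      _ = _ := by
          rw [Finset.sum_add_distrib, Finset.sum_add_distrib, Finset.sum_add_distrib,
            ← Finset.sum_mul, ← Finset.sum_mul, ← Finset.sum_mul, Finset.sum_const]
          simp only [Finset.card_univ, Fintype.card_fin, nsmul_eq_mul]
          push_cast
          ring
  rw [hRHS, hsum1, hsum2, hsum3, hLHS, hveq t r hr]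
  simp only [Gfun, Gfun1, Gfun2]
  have e1 : r ^ (m - 1) = r ^ m / r := by
    rw [Real.rpow_sub hr, Real.rpow_one]
  have e2 : r ^ (m - 2) = r ^ m / r ^ 2 := by
    rw [Real.rpow_sub hr]
    norm_num
  rw [e1, e2, hm, ← hwdef]
  field_simp
  ring
end
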